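/- arXiv:2011.12940 — 4 statements merged into one kernel-verified Lean document; each statement's English description precedes it below -/
import Mathlib

section
/- Let G be a group and U ≤ G a cyclic subgroup of finite index in G. Then for any g ∈ G, the element g normalizes the intersection U ∩ gUg⁻¹. -/
/-!
Put `V = U ⊓ gUg⁻¹`. Both `V` and `gVg⁻¹ = gUg⁻¹ ⊓ g²Ug⁻²` lie in the cyclic group `gUg⁻¹` and have
the same finite index in `G`. In a cyclic group a subgroup of finite index `n` contains every
`n`-th power, and the subgroup of `n`-th powers has index dividing `n`; hence a subgroup of finite
index is determined by its index, and `gVg⁻¹ = V`.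
-/

namespace IsCyclic

variable {C : Type*} [Group C] [IsCyclic C]

theorem index_dvd_of_forall_pow_mem {H : Subgroup C} {n : ℕ} (h : ∀ x, x ^ n ∈ H) :
    H.index ∣ n := by
  have : IsCyclic (C ⧸ H) := isCyclic_of_surjective _ (QuotientGroup.mk'_surjective H)
  rw [Subgroup.index, ← IsCyclic.exponent_eq_card]
  refine Monoid.exponent_dvd_of_forall_pow_eq_one fun q => ?_
  induction q using QuotientGroup.induction_on with
  | H x => rw [← QuotientGroup.mk_pow, QuotientGroup.eq_one_iff]; exact h x

theorem le_of_index_dvd {A B : Subgroup C} [A.FiniteIndex] (h : B.index ∣ A.index) : A ≤ B := by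
  have hpow : ∀ x : C, x ^ A.index ∈ A ⊓ B := by
    intro x
    obtain ⟨k, hk⟩ := h
    refine ⟨A.pow_index_mem x, ?_⟩
    rw [hk, pow_mul]
    exact Subgroup.pow_mem _ (B.pow_index_mem x) k
  have hindex : (A ⊓ B).index = A.index :=
    Nat.dvd_antisymm (index_dvd_of_forall_pow_mem hpow) (Subgroup.index_dvd_of_le inf_le_left)
  have hrel : (A ⊓ B).relIndex A = 1 := by
    have := Subgroup.relIndex_mul_index (inf_le_left : A ⊓ B ≤ A)
    rw [hindex] at this
    exact (Nat.mul_eq_right Subgroup.FiniteIndex.index_ne_zero).mp this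
  exact (Subgroup.relIndex_eq_one.mp hrel).trans inf_le_right

theorem subgroup_eq_of_index_eq {A B : Subgroup C} [A.FiniteIndex] (h : A.index = B.index) :
    A = B :=
  have : B.FiniteIndex := ⟨h ▸ Subgroup.FiniteIndex.index_ne_zero⟩
  le_antisymm (le_of_index_dvd (h ▸ dvd_rfl)) (le_of_index_dvd (h ▸ dvd_rfl))

end IsCyclic

namespace Subgroup

variable {G : Type*} [Group G]

theorem eq_of_index_eq_of_le_of_isCyclic {H K L : Subgroup G} [IsCyclic L] [H.FiniteIndex]
    (hHL : H ≤ L) (hKL : K ≤ L) (h : H.index = K.index) : H = K := by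
  have hL : L.index ≠ 0 := (finiteIndex_of_le hHL).index_ne_zero
  have hrel : H.relIndex L = K.relIndex L := Nat.eq_of_mul_eq_mul_right (Nat.pos_of_ne_zero hL)
    (by rw [relIndex_mul_index hHL, relIndex_mul_index hKL, h])
  have hsub : H.subgroupOf L = K.subgroupOf L := IsCyclic.subgroup_eq_of_index_eq hrel
  rwa [subgroupOf_inj, inf_of_le_left hHL, inf_of_le_left hKL] at hsub

end Subgroup

/-- If `U` is a cyclic subgroup of finite index in a group `G`, then any `g ∈ G`
normalizes `U ⊓ gUg⁻¹`. -/
theorem normalizes_inter_conj (G : Type*) [Group G] (U : Subgroup G)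
    (hU : IsCyclic U) [U.FiniteIndex] (g : G) :
    g ∈ Subgroup.normalizer (U ⊓ Subgroup.map (MulAut.conj g).toMonoidHom U) := by
  set c := MulAut.conj g
  have : IsCyclic (U.map c.toMonoidHom) := isCyclic_of_surjective _ (c.subgroupMap U).surjective
  have : (U.map c.toMonoidHom).FiniteIndex :=
    ⟨(Subgroup.index_map_equiv U c).trans_ne Subgroup.FiniteIndex.index_ne_zero⟩
  change g ∈ Subgroup.normalizer (U ⊓ U.map c.toMonoidHom : Subgroup G)
  rw [Subgroup.mem_normalizer_iff_map_conj_eq]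
  exact (Subgroup.eq_of_index_eq_of_le_of_isCyclic (L := U.map c.toMonoidHom) inf_le_right
    (Subgroup.map_mono inf_le_left) (Subgroup.index_map_equiv _ c).symm).symm
end

section
/- Let G be a finite group generated by two elements u and h, and let A = {a ∈ G : a centralizes both u and h⁻¹u⁻¹h, and a·h·a⁻¹ ∈ ⟨u⟩·h}. Then the map z : A → ⟨u⟩ sending a to the commutator [a,h] = a·h·a⁻¹·h⁻¹ is a group homomorphism whose kernel equals the center Z(G). -/
/-! Since `a` commutes with `u`, it commutes with `⁅b, h⁆ ∈ ⟨u⟩`, so the identity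
`⁅a * b, h⁆ = a ⁅b, h⁆ a⁻¹ ⁅a, h⁆` collapses to `⁅b, h⁆ ⁅a, h⁆`, and the two factors
commute inside the cyclic group `⟨u⟩`. An element with `⁅a, h⁆ = 1` commutes with both
generators `u` and `h`, hence is central. -/

open scoped commutatorElement

section

variable {G : Type*} [Group G]

theorem commutatorElement_mul_left_of_commute {a b c : G} (hab : Commute a ⁅b, c⁆) :
    ⁅a * b, c⁆ = ⁅b, c⁆ * ⁅a, c⁆ := by
  rw [commutatorElement_mul_left_eq_conj_mul, hab.mul_inv_cancel]

theorem commutatorElement_mul_left_of_mem_zpowers {a b c u : G} (hau : Commute a u)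
    (ha : ⁅a, c⁆ ∈ Subgroup.zpowers u) (hb : ⁅b, c⁆ ∈ Subgroup.zpowers u) :
    ⁅a * b, c⁆ = ⁅a, c⁆ * ⁅b, c⁆ := by
  obtain ⟨m, hm⟩ := ha
  obtain ⟨n, hn⟩ := hb
  rw [commutatorElement_mul_left_of_commute (hn ▸ hau.zpow_right n), ← hm, ← hn]
  exact Commute.zpow_zpow_self u n m

theorem mem_center_iff_commute_of_closure_pair_eq_top {u h : G}
    (hgen : Subgroup.closure {u, h} = ⊤) {g : G} :
    g ∈ Subgroup.center G ↔ Commute g u ∧ Commute g h := by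
  simp only [Subgroup.center_eq_iInf hgen, Subgroup.mem_iInf,
    Subgroup.mem_centralizer_singleton_iff, Set.mem_insert_iff, Set.mem_singleton_iff,
    forall_eq_or_imp, forall_eq]
  rfl

end

theorem commutator_with_h_is_hom_with_kernel_center_general (G : Type*) [Group G]
    (u h : G) (hgen : Subgroup.closure {u, h} = ⊤)
    (A : Set G)
    (hA : A = {a : G | a * u = u * a ∧
        a * (h⁻¹ * u⁻¹ * h) = (h⁻¹ * u⁻¹ * h) * a ∧
        a * h * a⁻¹ * h⁻¹ ∈ Subgroup.zpowers u}) :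
    (∀ a ∈ A, ∀ b ∈ A, a * b ∈ A ∧
        (a * b) * h * (a * b)⁻¹ * h⁻¹ = (a * h * a⁻¹ * h⁻¹) * (b * h * b⁻¹ * h⁻¹)) ∧
      {a ∈ A | a * h * a⁻¹ * h⁻¹ = 1} = (Subgroup.center G : Set G) := by
  subst hA
  simp only [← commutatorElement_def]
  constructor
  · rintro a ⟨hau, hav, ha⟩ b ⟨hbu, hbv, hb⟩
    have hmul := commutatorElement_mul_left_of_mem_zpowers hau ha hb
    exact ⟨⟨Commute.mul_left hau hbu, Commute.mul_left hav hbv,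
      hmul ▸ Subgroup.mul_mem _ ha hb⟩, hmul⟩
  · ext g
    simp only [Set.mem_ofPred_eq, SetLike.mem_coe,
      mem_center_iff_commute_of_closure_pair_eq_top hgen, commutatorElement_eq_one_iff_commute]
    constructor
    · rintro ⟨⟨hgu, -, -⟩, hgh⟩
      exact ⟨hgu, hgh⟩
    · rintro ⟨hgu, hgh⟩
      have hgv : Commute g (h⁻¹ * u⁻¹ * h) :=
        (hgh.inv_right.mul_right hgu.inv_right).mul_right hgh
      have hgh' : ⁅g, h⁆ = 1 := commutatorElement_eq_one_iff_commute.mpr hgh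
      exact ⟨⟨hgu, hgv, hgh' ▸ one_mem _⟩, hgh⟩

/-- Let `G` be a finite group generated by `u` and `h`, and let
`A = {a ∈ G : a` centralizes `u` and `h⁻¹u⁻¹h`, and `a h a⁻¹ ∈ ⟨u⟩·h}`.
Then `a ↦ [a,h] = a h a⁻¹ h⁻¹` is a group homomorphism `A → ⟨u⟩` whose kernel
is exactly the center `Z(G)`. -/
theorem commutator_with_h_is_hom_with_kernel_center (G : Type*) [Group G] [Finite G]
    (u h : G) (hgen : Subgroup.closure {u, h} = ⊤)
    (A : Set G)
    (hA : A = {a : G | a * u = u * a ∧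
        a * (h⁻¹ * u⁻¹ * h) = (h⁻¹ * u⁻¹ * h) * a ∧
        a * h * a⁻¹ * h⁻¹ ∈ Subgroup.zpowers u}) :
    (∀ a ∈ A, ∀ b ∈ A, a * b ∈ A ∧
        (a * b) * h * (a * b)⁻¹ * h⁻¹ = (a * h * a⁻¹ * h⁻¹) * (b * h * b⁻¹ * h⁻¹)) ∧
      {a ∈ A | a * h * a⁻¹ * h⁻¹ = 1} = (Subgroup.center G : Set G) :=
  commutator_with_h_is_hom_with_kernel_center_general G u h hgen A hA
end

section
/- For an odd prime p, the number of solutions (x,y,z) ∈ F_p³ to x² + y² + z² − x·y·z = 0 with (x,y,z) ≠ (0,0,0) equals p(p+3) if p ≡ 1 (mod 4) and p(p−3) if p ≡ 3 (mod 4). -/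
/-!
For fixed `y, z` the Markoff equation is a monic quadratic in `x` with discriminant
`(z² - 4) y² - 4 z²`, so it has `1 + χ(disc)` roots, `χ` the quadratic character.
Summing over `y` uses `∑ y, χ (a y² + b) = -χ a` for `a b ≠ 0`, which comes from the Jacobi
sum `J(χ, χ) = -χ (-1)`; the values `z = 0` and `z = ±2` contribute the extra terms.
Altogether the surface has `q² + 3 q χ(-1) + 1` points over `𝔽_q`, and `χ(-1) = ±1`
according to `q mod 4`.
-/

open Finset

section MarkoffCount

variable {F : Type*} [Field F] [Fintype F] [DecidableEq F]

local notation "χ" => quadraticChar F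

theorem card_filter_sq_eq (hF : ringChar F ≠ 2) (a : F) :
    (#{x : F | x ^ 2 = a} : ℤ) = χ a + 1 := by
  simpa only [Set.toFinset_ofPred] using quadraticChar_card_sqrts hF a

theorem card_filter_quadratic_eq_zero (hF : ringChar F ≠ 2) {a : F} (ha : a ≠ 0) (b c : F) :
    (#{x : F | a * (x * x) + b * x + c = 0} : ℤ) = χ (discrim a b c) + 1 := by
  have : NeZero (2 : F) := ⟨Ring.two_ne_zero hF⟩
  rw [← card_filter_sq_eq hF, Nat.cast_inj]
  refine card_equiv ((Equiv.mulLeft₀ (2 * a) (mul_ne_zero two_ne_zero ha)).trans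
    (Equiv.addRight b)) fun x => ?_
  simp [quadratic_eq_zero_iff_discrim_eq_sq ha, eq_comm, mul_assoc]

theorem sum_comp_sq (hF : ringChar F ≠ 2) (f : F → ℤ) :
    ∑ y, f (y ^ 2) = ∑ u, (χ u + 1) * f u := by
  rw [← sum_fiberwise' univ (· ^ 2) f]
  refine sum_congr rfl fun u _ => ?_
  rw [sum_const, nsmul_eq_mul, ← card_filter_sq_eq hF]

theorem sum_quadraticChar_mul_add (hF : ringChar F ≠ 2) {c : F} (hc : c ≠ 0) :
    ∑ u, χ u * χ (u + c) = -1 := by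
  have hχc := quadraticChar_sq_one hc
  have hχneg1 := quadraticChar_sq_one (neg_ne_zero.2 (one_ne_zero (α := F)))
  calc ∑ u, χ u * χ (u + c)
      = ∑ x, χ (-c * x) * χ (-c * x + c) :=
        (Fintype.sum_equiv (Equiv.mulLeft₀ (-c) (neg_ne_zero.2 hc)) _ _ fun _ => rfl).symm
    _ = χ (-1) * jacobiSum χ χ⁻¹ := by
        rw [(quadraticChar_isQuadratic F).inv, jacobiSum, mul_sum]
        refine sum_congr rfl fun x _ => ?_
        rw [show -c * x + c = c * (1 - x) by ring, show -c * x = -1 * c * x by ring,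
          map_mul, map_mul, map_mul]
        linear_combination χ (-1) * χ x * χ (1 - x) * hχc
    _ = -1 := by
        rw [jacobiSum_nontrivial_inv (quadraticChar_ne_one hF)]
        linear_combination -hχneg1

theorem sum_quadraticChar_sq_add (hF : ringChar F ≠ 2) {c : F} (hc : c ≠ 0) :
    ∑ y, χ (y ^ 2 + c) = -1 := by
  have hshift : ∑ u, χ (u + c) = 0 :=
    (Fintype.sum_equiv (Equiv.addRight c) _ _ fun _ => rfl).trans (quadraticChar_sum_zero hF)
  rw [sum_comp_sq hF fun u => χ (u + c)]
  simp_rw [add_one_mul, sum_add_distrib, hshift, sum_quadraticChar_mul_add hF hc, add_zero]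

theorem sum_quadraticChar_mul_sq_add (hF : ringChar F ≠ 2) {a b : F} (ha : a ≠ 0)
    (hb : b ≠ 0) : ∑ y, χ (a * y ^ 2 + b) = -χ a := by
  have hfactor (y : F) : a * y ^ 2 + b = a * (y ^ 2 + b / a) := by field_simp
  simp_rw [hfactor, map_mul, ← mul_sum, sum_quadraticChar_sq_add hF (div_ne_zero hb ha),
    mul_neg_one]

theorem sum_quadraticChar_mul_sq (a : F) :
    ∑ y, χ (a * y ^ 2) = (Fintype.card F - 1) * χ a := by
  have hsq (y : F) : χ (y ^ 2) = 1 - if y = 0 then 1 else 0 := by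
    split_ifs with hy
    · simp [hy]
    · simp [quadraticChar_sq_one' hy]
  simp_rw [map_mul, ← mul_sum, hsq, sum_sub_distrib, sum_ite_eq']
  simp [mul_comm]

theorem card_filter_markoff_fiber (hF : ringChar F ≠ 2) (y z : F) :
    (#{x : F | x ^ 2 + y ^ 2 + z ^ 2 - x * y * z = 0} : ℤ) =
      χ ((z ^ 2 - 4) * y ^ 2 - 4 * z ^ 2) + 1 := by
  have hquad (x : F) : x ^ 2 + y ^ 2 + z ^ 2 - x * y * z = 0 ↔
      1 * (x * x) + -(y * z) * x + (y ^ 2 + z ^ 2) = 0 := by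
    constructor <;> intro h <;> linear_combination h
  rw [filter_congr fun x _ => hquad x, card_filter_quadratic_eq_zero hF one_ne_zero, discrim]
  ring_nf

theorem sum_quadraticChar_markoff_disc (hF : ringChar F ≠ 2) (z : F) :
    ∑ y, χ ((z ^ 2 - 4) * y ^ 2 - 4 * z ^ 2) =
      -χ (z ^ 2 - 4) + (if z ^ 2 = 4 then Fintype.card F * χ (-1) else 0) +
        (if z = 0 then Fintype.card F * χ (-1) else 0) := by
  have h2 : (2 : F) ≠ 0 := Ring.two_ne_zero hF
  have h4 : (4 : F) = 2 ^ 2 := by norm_num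
  have h4ne : (4 : F) ≠ 0 := h4 ▸ pow_ne_zero 2 h2
  have hχ4 (c : F) : χ (4 * c) = χ c := by
    rw [h4, map_mul, quadraticChar_sq_one' h2, one_mul]
  by_cases hz : z = 0
  · have hz2 : z ^ 2 ≠ 4 := by rw [hz, zero_pow two_ne_zero]; exact h4ne.symm
    have hterm (y : F) : (z ^ 2 - 4) * y ^ 2 - 4 * z ^ 2 = 4 * -1 * y ^ 2 := by rw [hz]; ring
    simp only [hterm, sum_quadraticChar_mul_sq, if_neg hz2, if_pos hz, hχ4]
    rw [show z ^ 2 - 4 = 4 * -1 by rw [hz]; ring, hχ4]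
    ring
  by_cases hz2 : z ^ 2 = 4
  · have hterm (y : F) : (z ^ 2 - 4) * y ^ 2 - 4 * z ^ 2 = 4 * (4 * -1) := by rw [hz2]; ring
    rw [sum_congr rfl fun y _ => congrArg χ (hterm y), hχ4, hχ4, sum_const, card_univ,
      nsmul_eq_mul, hz2, sub_self, quadraticChar_zero, if_pos rfl, if_neg hz]
    ring
  have hterm (y : F) :
      (z ^ 2 - 4) * y ^ 2 - 4 * z ^ 2 = (z ^ 2 - 4) * y ^ 2 + -(4 * z ^ 2) := by ring
  have hb : -(4 * z ^ 2) ≠ 0 := neg_ne_zero.2 (mul_ne_zero h4ne (pow_ne_zero 2 hz))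
  rw [if_neg hz2, if_neg hz]
  simp only [hterm, sum_quadraticChar_mul_sq_add hF (sub_ne_zero.2 hz2) hb, add_zero]

theorem sum_sum_quadraticChar_markoff_disc (hF : ringChar F ≠ 2) :
    ∑ z : F, ∑ y, χ ((z ^ 2 - 4) * y ^ 2 - 4 * z ^ 2) = 3 * Fintype.card F * χ (-1) + 1 := by
  have h2 : (2 : F) ≠ 0 := Ring.two_ne_zero hF
  have h4 : (4 : F) = 2 ^ 2 := by norm_num
  have hsq : ∑ z : F, χ (z ^ 2 - 4) = -1 := by
    simp only [sub_eq_add_neg]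
    exact sum_quadraticChar_sq_add hF (neg_ne_zero.2 (h4 ▸ pow_ne_zero 2 h2))
  have hroots : (#{z : F | z ^ 2 = 4} : ℤ) = 2 := by
    rw [card_filter_sq_eq hF, h4, quadraticChar_sq_one' h2]
    rfl
  simp only [sum_quadraticChar_markoff_disc hF, sum_add_distrib, sum_neg_distrib, hsq,
    sum_ite, sum_const_zero, sum_const, nsmul_eq_mul, hroots, filter_eq', mem_univ, if_true,
    card_singleton]
  ring

theorem card_filter_markoff (hF : ringChar F ≠ 2) :
    (#{v : F × F × F | v.1 ^ 2 + v.2.1 ^ 2 + v.2.2 ^ 2 - v.1 * v.2.1 * v.2.2 = 0} : ℤ) =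
      Fintype.card F ^ 2 + 3 * Fintype.card F * χ (-1) + 1 := by
  rw [card_filter, Nat.cast_sum, Fintype.sum_prod_type, sum_comm, Fintype.sum_prod_type]
  simp only [Nat.cast_ite, Nat.cast_one, Nat.cast_zero, sum_boole, card_filter_markoff_fiber hF,
    sum_add_distrib]
  rw [sum_comm, sum_sum_quadraticChar_markoff_disc hF]
  simp only [sum_const, card_univ, nsmul_eq_mul]
  ring

theorem natCard_markoff_ne_zero (hF : ringChar F ≠ 2) :
    (Nat.card {v : F × F × F //
        v.1 ^ 2 + v.2.1 ^ 2 + v.2.2 ^ 2 - v.1 * v.2.1 * v.2.2 = 0 ∧ v ≠ (0, 0, 0)} : ℤ) =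
      Fintype.card F ^ 2 + 3 * Fintype.card F * χ (-1) := by
  rw [Nat.card_eq_fintype_card, Fintype.card_subtype, filter_and, filter_ne', inter_erase,
    inter_univ, card_erase_of_mem (by simp), Nat.cast_pred (card_pos.2 ⟨0, by simp⟩),
    card_filter_markoff hF]
  ring

end MarkoffCount

theorem markoff_point_count_general (p : ℕ) [Fact p.Prime] :
    (p % 4 = 1 →
      Nat.card {v : ZMod p × ZMod p × ZMod p //
          v.1 ^ 2 + v.2.1 ^ 2 + v.2.2 ^ 2 - v.1 * v.2.1 * v.2.2 = 0 ∧ v ≠ (0, 0, 0)} =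
        p * (p + 3)) ∧
    (p % 4 = 3 →
      Nat.card {v : ZMod p × ZMod p × ZMod p //
          v.1 ^ 2 + v.2.1 ^ 2 + v.2.2 ^ 2 - v.1 * v.2.1 * v.2.2 = 0 ∧ v ≠ (0, 0, 0)} =
        p * (p - 3)) := by
  have hF (hp : p % 4 = 1 ∨ p % 4 = 3) : ringChar (ZMod p) ≠ 2 := by
    rw [ZMod.ringChar_zmod_n]; omega
  refine ⟨fun hp => ?_, fun hp => ?_⟩
  · have h := natCard_markoff_ne_zero (hF (.inl hp))
    rw [quadraticChar_neg_one (hF (.inl hp)), ZMod.card, ZMod.χ₄_nat_one_mod_four hp] at h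
    zify
    rw [h]
    ring
  · have h := natCard_markoff_ne_zero (hF (.inr hp))
    rw [quadraticChar_neg_one (hF (.inr hp)), ZMod.card, ZMod.χ₄_nat_three_mod_four hp] at h
    zify [show 3 ≤ p by omega]
    rw [h]
    ring

/-- For an odd prime `p`, the number of nonzero `F_p`-points of the Markoff surface
`x² + y² + z² - xyz = 0` is `p(p+3)` if `p ≡ 1 (mod 4)` and `p(p-3)` if `p ≡ 3 (mod 4)`. -/
theorem markoff_point_count (p : ℕ) [Fact p.Prime] (hodd : Odd p) :
    (p % 4 = 1 →
      Nat.card {v : ZMod p × ZMod p × ZMod p //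
          v.1 ^ 2 + v.2.1 ^ 2 + v.2.2 ^ 2 - v.1 * v.2.1 * v.2.2 = 0 ∧ v ≠ (0, 0, 0)} =
        p * (p + 3)) ∧
    (p % 4 = 3 →
      Nat.card {v : ZMod p × ZMod p × ZMod p //
          v.1 ^ 2 + v.2.1 ^ 2 + v.2.2 ^ 2 - v.1 * v.2.1 * v.2.2 = 0 ∧ v ≠ (0, 0, 0)} =
        p * (p - 3)) :=
  markoff_point_count_general p
end

section
/- Let A be a commutative ring and I ⊂ A an ideal that is flat as an A-module, and let e ≥ 1. Then the multiplication map induces an isomorphism of A-modules I^{⊗e} ≅ I^e, and moreover the natural map I^{⊗e} ⊗_A (A/I) → (I/I²)^{⊗e} sending (x₁⊗···⊗x_e)⊗a to a·(x̄₁⊗···⊗x̄_e) is an isomorphism, where x̄ᵢ denotes the image of xᵢ in I/I². -/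
/-!
Tensoring the inclusion `J ↪ A` of any ideal with the flat module `I` stays injective, so
multiplication `J ⊗ I → J * I` is an isomorphism; with `J = I ^ n` this gives
`I^{⊗(n+1)} ≅ I ^ n ⊗ I ≅ I ^ (n+1)` by induction.

Since `A → A ⧸ I` is surjective, `A ⧸ I ⊗ A ⧸ I ≅ A ⧸ I`, so base change to `A ⧸ I` can be split
over the factors of a tensor product: `(P ⊗ Q) ⊗ A ⧸ I ≅ (P ⊗ A ⧸ I) ⊗ (Q ⊗ A ⧸ I)`. Iterating,
`I^{⊗e} ⊗ A ⧸ I ≅ (I ⊗ A ⧸ I)^{⊗e} ≅ (I ⧸ I²)^{⊗e}`.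
-/

open scoped TensorProduct
open PiTensorProduct

namespace TensorPower

variable (R M : Type*) [CommSemiring R] [AddCommMonoid M] [Module R M]

noncomputable def succEquiv (n : ℕ) : (⨂[R]^(n + 1) M) ≃ₗ[R] (⨂[R]^n M) ⊗[R] M :=
  mulEquiv.symm ≪≫ₗ TensorProduct.congr (.refl R _) (subsingletonEquiv 0)

variable {R M} in
theorem succEquiv_tprod {n : ℕ} (x : Fin (n + 1) → M) :
    succEquiv R M n (tprod R x) = tprod R (Fin.init x) ⊗ₜ x (Fin.last n) := by
  have h : mulEquiv (tprod R (Fin.init x) ⊗ₜ tprod R fun _ : Fin 1 ↦ x (Fin.last n)) =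
      tprod R x := by
    rw [← gMul_def, tprod_mul_tprod, Fin.append_right_eq_snoc, Fin.snoc_init_self]
  simp [succEquiv, ← h]

end TensorPower

namespace TensorProduct

variable {A B : Type*} [CommRing A] [CommRing B] [Algebra A B]
  (hB : Function.Surjective (algebraMap A B))

noncomputable def mulEquivOfSurjective : B ⊗[A] B ≃ₗ[A] B :=
  .ofBijective (LinearMap.mul' A B) (LinearMap.mul'_bijective_of_surjective A B hB)

theorem mulEquivOfSurjective_symm_apply (b : B) :
    (mulEquivOfSurjective hB).symm b = b ⊗ₜ 1 := by
  rw [LinearEquiv.symm_apply_eq]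
  simp [mulEquivOfSurjective]

variable (M N : Type*) [AddCommGroup M] [Module A M] [AddCommGroup N] [Module A N]

noncomputable def tensorTensorEquivOfSurjective :
    (M ⊗[A] N) ⊗[A] B ≃ₗ[A] (M ⊗[A] B) ⊗[A] (N ⊗[A] B) :=
  congr (.refl A _) (mulEquivOfSurjective hB).symm ≪≫ₗ tensorTensorTensorComm A M N B B

variable {M N} in
theorem tensorTensorEquivOfSurjective_tmul (m : M) (n : N) (b : B) :
    tensorTensorEquivOfSurjective hB M N (m ⊗ₜ n ⊗ₜ b) = m ⊗ₜ b ⊗ₜ (n ⊗ₜ 1) := by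
  simp [tensorTensorEquivOfSurjective, mulEquivOfSurjective_symm_apply]

end TensorProduct

namespace TensorPower

open TensorProduct

variable {A B : Type*} [CommRing A] [CommRing B] [Algebra A B]
  (hB : Function.Surjective (algebraMap A B)) (M : Type*) [AddCommGroup M] [Module A M]

noncomputable def succTensorEquivOfSurjective :
    ∀ n : ℕ, (⨂[A]^(n + 1) M) ⊗[A] B ≃ₗ[A] ⨂[A]^(n + 1) (M ⊗[A] B)
  | 0 => congr (subsingletonEquiv (0 : Fin 1)) (.refl A B) ≪≫ₗ
      (subsingletonEquiv (s := fun _ ↦ M ⊗[A] B) (0 : Fin 1)).symm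
  | n + 1 => congr (succEquiv A M (n + 1)) (.refl A B) ≪≫ₗ
      tensorTensorEquivOfSurjective hB _ M ≪≫ₗ
      congr (succTensorEquivOfSurjective n) (.refl A _) ≪≫ₗ
      (succEquiv A (M ⊗[A] B) (n + 1)).symm

variable {M} in
theorem succTensorEquivOfSurjective_tprod_tmul_one {n : ℕ} (x : Fin (n + 1) → M) :
    succTensorEquivOfSurjective hB M n (tprod A x ⊗ₜ 1) = tprod A fun i ↦ x i ⊗ₜ[A] (1 : B) := by
  induction n with
  | zero =>
    simp only [succTensorEquivOfSurjective, LinearEquiv.trans_apply, congr_tmul,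
      subsingletonEquiv_apply_tprod, LinearEquiv.refl_apply, subsingletonEquiv_symm_apply']
    congr with i
    rw [Subsingleton.elim i 0]
  | succ n ih =>
    simp only [succTensorEquivOfSurjective, LinearEquiv.trans_apply, LinearEquiv.symm_apply_eq]
    simp [succEquiv_tprod, tensorTensorEquivOfSurjective_tmul, ih, Fin.init_def]

end TensorPower

namespace Ideal

variable {A : Type*} [CommRing A]

theorem linearDisjoint_of_flat_right (J K : Ideal A) [Module.Flat A K] :
    Submodule.LinearDisjoint J K :=
  .of_left_le_one_of_flat _ _ (by simp [one_eq_top])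

noncomputable def tensorPowerEquivPow (I : Ideal A) [Module.Flat A I] :
    ∀ n : ℕ, (⨂[A]^n I) ≃ₗ[A] ↥(I ^ n)
  | 0 => isEmptyEquiv (Fin 0) ≪≫ₗ Submodule.topEquiv.symm ≪≫ₗ
      LinearEquiv.ofEq _ _ (by rw [pow_zero, one_eq_top])
  | n + 1 => TensorPower.succEquiv A I n ≪≫ₗ
      TensorProduct.congr (tensorPowerEquivPow I n) (.refl A I) ≪≫ₗ
      (linearDisjoint_of_flat_right _ I).mulMap ≪≫ₗ LinearEquiv.ofEq _ _ (pow_succ I n).symm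

theorem coe_tensorPowerEquivPow_tprod (I : Ideal A) [Module.Flat A I] {n : ℕ} (x : Fin n → I) :
    (tensorPowerEquivPow I n (tprod A x) : A) = ∏ i, (x i : A) := by
  induction n with
  | zero => simp [tensorPowerEquivPow]
  | succ n ih =>
    simp [tensorPowerEquivPow, TensorPower.succEquiv_tprod, ih, Fin.prod_univ_castSucc,
      Fin.init_def]

end Ideal

/-- For a flat ideal `I ⊂ A` and `e ≥ 1`, multiplication induces an isomorphism
`I^{⊗e} ≅ Iᵉ`, and the natural map `I^{⊗e} ⊗_A (A/I) → (I/I²)^{⊗e}` sending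
`(x₁⊗⋯⊗x_e)⊗a` to `a·(x̄₁⊗⋯⊗x̄_e)` is an isomorphism. -/
theorem tensor_power_of_flat_ideal (A : Type*) [CommRing A] (I : Ideal A)
    [Module.Flat A I] (e : ℕ) (he : 1 ≤ e) :
    (∃ φ : (⨂[A] (_ : Fin e), I) ≃ₗ[A] (I ^ e : Ideal A),
      ∀ x : Fin e → I,
        (φ (PiTensorProduct.tprod A x) : A) = ∏ i, (x i : A)) ∧
    (∃ ψ : ((⨂[A] (_ : Fin e), I) ⊗[A] (A ⧸ I)) ≃ₗ[A] (⨂[A] (_ : Fin e), I.Cotangent),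
      ∀ (x : Fin e → I) (a : A),
        ψ (PiTensorProduct.tprod A x ⊗ₜ[A] (Ideal.Quotient.mk I a)) =
          a • PiTensorProduct.tprod A fun i => I.toCotangent (x i)) := by
  refine ⟨⟨I.tensorPowerEquivPow e, I.coe_tensorPowerEquivPow_tprod⟩, ?_⟩
  obtain ⟨n, rfl⟩ := Nat.exists_eq_add_of_le' he
  let cot : I ⊗[A] (A ⧸ I) ≃ₗ[A] I.Cotangent := TensorProduct.tensorQuotEquivQuotSMul I I
  have hcot (y : I) : cot (y ⊗ₜ 1) = I.toCotangent y := by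
    rw [← map_one (Ideal.Quotient.mk I)]
    exact (TensorProduct.tensorQuotEquivQuotSMul_tmul_mk I y 1).trans (congrArg _ (one_smul A y))
  refine ⟨TensorPower.succTensorEquivOfSurjective Ideal.Quotient.mk_surjective I n ≪≫ₗ
    PiTensorProduct.congr fun _ ↦ cot, fun x a ↦ ?_⟩
  rw [← Ideal.Quotient.algebraMap_eq, Algebra.algebraMap_eq_smul_one, TensorProduct.tmul_smul]
  simp [TensorPower.succTensorEquivOfSurjective_tprod_tmul_one, congr_tprod, hcot]
end
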